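/- arXiv:1301.5563 — 4 statements merged into one kernel-verified Lean document; each statement's English description precedes it below -/
import Mathlib

section
/- Let d ≥ 1 and let Ω ⊂ ℝ^d be a nonempty bounded open convex set with Lebesgue measure |Ω|. Then there exist constants C₁ > 0 and C₂ > 0, depending only on Ω, with the following property: for every function v : ℝ^d → ℝ that is differentiable at every point of Ω, nonnegative on Ω, and such that both v and x ↦ ‖∇v(x)‖ are Lebesgue integrable on Ω, setting K := ∫_Ω max(log v(x), 0) dx, one has ∫_Ω v(x) dx ≤ |Ω|·exp(C₁·K) + (C₂/|Ω|)·∫_Ω ‖∇v(x)‖ dx. -/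
/-
Markov's inequality for `(log v)⁺` shows that `v ≤ M := exp (2K / |Ω|)` on a set `G ⊆ Ω` with
`|G| ≥ |Ω| / 2`. For `x ∈ Ω` and `y ∈ G`, integrating `∇v` along the segment `[y, x] ⊆ Ω` gives
`v x ≤ M + diam Ω * ∫₀¹ ‖∇v (y + t (x - y))‖ dt`. Averaging over `y ∈ G` and integrating over
`x ∈ Ω` leaves the segment kernel, which is at most `2^d |Ω| ∫_Ω ‖∇v‖`: for each `t`, integrate
first in whichever of `x`, `y` has coefficient `≥ 1/2` in `y + t (x - y) = (1 - t) y + t x`; that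
change of variables has Jacobian factor `≤ 2^d`. Hence `∫_Ω v ≤ |Ω| M + 2^(d+1) diam Ω ∫_Ω ‖∇v‖`.
-/

open MeasureTheory Set Module
open scoped ENNReal

theorem max_log_zero_le_abs (x : ℝ) : max (Real.log x) 0 ≤ |x| :=
  max_le (Real.log_abs x ▸ Real.log_le_self (abs_nonneg x)) (abs_nonneg x)

theorem measure_two_div_mul_integral_lt_le_half {α : Type*} [MeasurableSpace α] {μ : Measure α}
    [IsFiniteMeasure μ] {f : α → ℝ} (hf0 : 0 ≤ᵐ[μ] f) (hf : Integrable f μ) :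
    μ {x | 2 / μ.real univ * ∫ x, f x ∂μ < f x} ≤ μ univ / 2 := by
  set c := 2 / μ.real univ * ∫ x, f x ∂μ
  rcases (integral_nonneg_of_ae hf0).eq_or_lt with h0 | hpos
  · have hnull : μ {x | c < f x} = 0 := by
      refine measure_mono_null (fun x hx => ?_)
        (ae_iff.1 ((integral_eq_zero_iff_of_nonneg_ae hf0 hf).1 h0.symm))
      simp only [c, ← h0, mul_zero, mem_ofPred_eq] at hx ⊢
      exact hx.ne'
    simp [hnull]
  have hμ : μ ≠ 0 := by
    rintro rfl
    simp at hpos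
  have hV : 0 < μ.real univ :=
    ENNReal.toReal_pos (Measure.measure_univ_ne_zero.2 hμ) (measure_ne_top _ _)
  have hc : 0 < c := by positivity
  have hmeas : μ.real {x | c ≤ f x} ≤ μ.real univ / 2 := by
    refine le_of_mul_le_mul_left ((mul_meas_ge_le_integral_of_nonneg hf0 hf c).trans_eq ?_) hc
    simp only [c]
    field_simp
  calc μ {x | c < f x} ≤ μ {x | c ≤ f x} := measure_mono fun x (hx : c < f x) => hx.le
    _ = ENNReal.ofReal (μ.real {x | c ≤ f x}) := (ofReal_measureReal (measure_ne_top _ _)).symm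
    _ ≤ ENNReal.ofReal (μ.real univ / 2) := ENNReal.ofReal_le_ofReal hmeas
    _ = μ univ / 2 := by
        rw [ENNReal.ofReal_div_of_pos two_pos, ofReal_measureReal (measure_ne_top _ _)]
        norm_num

theorem measure_le_two_mul_measure_le_exp {α : Type*} [MeasurableSpace α] {μ : Measure α}
    {Ω : Set α} (hΩ : MeasurableSet Ω) (hΩfin : μ Ω ≠ ∞) {v : α → ℝ} (hv : IntegrableOn v Ω μ) :
    μ Ω ≤ 2 * μ {x ∈ Ω | v x ≤ Real.exp (2 / μ.real Ω * ∫ x in Ω, max (Real.log (v x)) 0 ∂μ)} := by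
  have : IsFiniteMeasure (μ.restrict Ω) := isFiniteMeasure_restrict.2 hΩfin
  set c := 2 / μ.real Ω * ∫ x in Ω, max (Real.log (v x)) 0 ∂μ
  have hf : Integrable (fun x => max (Real.log (v x)) 0) (μ.restrict Ω) :=
    hv.abs.mono' (hv.aemeasurable.log.max aemeasurable_const).aestronglyMeasurable
      (ae_of_all _ fun x => by
        rw [Real.norm_of_nonneg (le_max_right _ _)]
        exact max_log_zero_le_abs (v x))
  have hhalf := measure_two_div_mul_integral_lt_le_half (ae_of_all _ fun x => le_max_right _ _) hf
  rw [measureReal_restrict_apply_univ, Measure.restrict_apply_univ] at hhalf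
  have hsub : {x | Real.exp c < v x} ⊆ {x | c < max (Real.log (v x)) 0} := fun x hx =>
    (Real.lt_log_iff_exp_lt (lt_trans (Real.exp_pos c) hx)).2 hx |>.trans_le (le_max_left _ _)
  have hcover : μ Ω ≤ μ {x ∈ Ω | v x ≤ Real.exp c} + μ Ω / 2 :=
    calc μ Ω = μ.restrict Ω ({x | v x ≤ Real.exp c} ∪ {x | Real.exp c < v x}) := by
          rw [← Measure.restrict_apply_univ]
          congr 1
          exact (eq_univ_of_forall fun x => le_or_gt (v x) (Real.exp c)).symm
      _ ≤ μ.restrict Ω {x | v x ≤ Real.exp c} + μ.restrict Ω {x | Real.exp c < v x} :=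
          measure_union_le _ _
      _ ≤ μ {x ∈ Ω | v x ≤ Real.exp c} + μ Ω / 2 := by
          rw [Measure.restrict_apply' hΩ, inter_comm, inter_ofPred_eq_sep]
          gcongr
          exact (measure_mono hsub).trans hhalf
  have hhalf_le : μ Ω / 2 ≤ μ {x ∈ Ω | v x ≤ Real.exp c} := by
    rw [← ENNReal.sub_half hΩfin]
    exact tsub_le_iff_right.2 hcover
  rw [ENNReal.div_le_iff (by norm_num) (by norm_num)] at hhalf_le
  rwa [mul_comm]

theorem ofReal_sub_le_setLIntegral_of_hasDerivAt_of_le {g g' φ : ℝ → ℝ} {a b : ℝ} (hab : a ≤ b)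
    (hg : ∀ t ∈ Icc a b, HasDerivAt g (g' t) t) (hφm : Measurable φ) (hφ0 : ∀ t, 0 ≤ φ t)
    (hg'φ : ∀ t ∈ Ioo a b, g' t ≤ φ t) :
    ENNReal.ofReal (g b - g a) ≤ ∫⁻ t in Ioc a b, ENNReal.ofReal (φ t) := by
  by_cases hfin : ∫⁻ t in Ioc a b, ENNReal.ofReal (φ t) = ∞
  · simp [hfin]
  have hφi : IntegrableOn φ (Ioc a b) := (lintegral_ofReal_ne_top_iff_integrable
    hφm.aestronglyMeasurable (ae_of_all _ hφ0)).1 hfin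
  have hsub : g b - g a ≤ ∫ t in a..b, φ t :=
    intervalIntegral.sub_le_integral_of_hasDeriv_right_of_le hab
      (fun t ht => (hg t ht).continuousAt.continuousWithinAt)
      (fun t ht => (hg t (Ioo_subset_Icc_self ht)).hasDerivWithinAt)
      ((integrableOn_Icc_iff_integrableOn_Ioc (by simp)).2 hφi) hg'φ
  rw [intervalIntegral.integral_of_le hab] at hsub
  calc ENNReal.ofReal (g b - g a) ≤ ENNReal.ofReal (∫ t in Ioc a b, φ t) :=
        ENNReal.ofReal_le_ofReal hsub
    _ = ∫⁻ t in Ioc a b, ENNReal.ofReal (φ t) :=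
        ofReal_integral_eq_lintegral_ofReal hφi (ae_of_all _ hφ0)

section

variable {E : Type*} [NormedAddCommGroup E] [NormedSpace ℝ E] [MeasurableSpace E] [BorelSpace E]

theorem ofReal_le_add_enorm_mul_lintegral_fderiv {v : E → ℝ} {x y : E}
    (hv : ∀ t ∈ Icc (0 : ℝ) 1, DifferentiableAt ℝ v (y + t • (x - y))) :
    ENNReal.ofReal (v x) ≤ ENNReal.ofReal (v y) +
      ‖x - y‖ₑ * ∫⁻ t in Ioc (0 : ℝ) 1, ‖fderiv ℝ v (y + t • (x - y))‖ₑ := by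
  have hγ (t : ℝ) : HasDerivAt (fun s : ℝ => y + s • (x - y)) (x - y) t := by
    simpa using ((hasDerivAt_id t).smul_const (x - y)).const_add y
  have hFTC := ofReal_sub_le_setLIntegral_of_hasDerivAt_of_le zero_le_one
    (fun t ht => (hv t ht).hasFDerivAt.comp_hasDerivAt t (hγ t))
    (((measurable_fderiv ℝ v).comp (by fun_prop)).norm.mul_const ‖x - y‖)
    (fun t => by positivity) (fun t _ => (le_abs_self _).trans ((fderiv ℝ v _).le_opNorm _))
  simp only [Function.comp_apply, one_smul, zero_smul, add_sub_cancel, add_zero,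
    ENNReal.ofReal_mul (norm_nonneg _), ofReal_norm] at hFTC
  calc ENNReal.ofReal (v x) = ENNReal.ofReal (v y + (v x - v y)) := by rw [add_sub_cancel]
    _ ≤ ENNReal.ofReal (v y) + ENNReal.ofReal (v x - v y) := ENNReal.ofReal_add_le
    _ ≤ _ := by
        rw [mul_comm, ← lintegral_mul_const' _ _ enorm_ne_top]
        gcongr

theorem Convex.ofReal_le_add_ediam_mul_lintegral_indicator {Ω : Set E} (hΩ : Convex ℝ Ω)
    {v : E → ℝ} (hv : ∀ x ∈ Ω, DifferentiableAt ℝ v x) {x y : E} (hx : x ∈ Ω) (hy : y ∈ Ω) :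
    ENNReal.ofReal (v x) ≤ ENNReal.ofReal (v y) +
      Metric.ediam Ω * ∫⁻ t in Ioc (0 : ℝ) 1, Ω.indicator (‖fderiv ℝ v ·‖ₑ) (y + t • (x - y)) := by
  have hseg (t : ℝ) (ht : t ∈ Icc (0 : ℝ) 1) : y + t • (x - y) ∈ Ω := hΩ.add_smul_sub_mem hy hx ht
  refine (ofReal_le_add_enorm_mul_lintegral_fderiv fun t ht => hv _ (hseg t ht)).trans ?_
  rw [setLIntegral_congr_fun measurableSet_Ioc
    fun t ht => indicator_of_mem (hseg t (Ioc_subset_Icc_self ht)) (‖fderiv ℝ v ·‖ₑ)]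
  gcongr
  rw [← edist_eq_enorm_sub]
  exact Metric.edist_le_ediam_of_mem hx hy

variable [FiniteDimensional ℝ E] (μ : Measure E) [μ.IsAddHaarMeasure]

theorem lintegral_comp_add_smul (F : E → ℝ≥0∞) (b : E) {c : ℝ} (hc : c ≠ 0) :
    ∫⁻ z, F (b + c • z) ∂μ = ENNReal.ofReal |(c ^ finrank ℝ E)⁻¹| * ∫⁻ z, F z ∂μ := by
  calc ∫⁻ z, F (b + c • z) ∂μ = ∫⁻ z, F (b + z) ∂(μ.map (c • ·)) :=
        (lintegral_map_equiv (F <| b + ·) (Homeomorph.smul (Units.mk0 c hc)).toMeasurableEquiv).symm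
    _ = _ := by
        rw [Measure.map_addHaar_smul μ hc, lintegral_smul_measure, lintegral_add_left_eq_self F b]
        rfl

theorem lintegral_comp_add_smul_le (F : E → ℝ≥0∞) (b : E) {c : ℝ} (hc : 2⁻¹ ≤ c) :
    ∫⁻ z, F (b + c • z) ∂μ ≤ 2 ^ finrank ℝ E * ∫⁻ z, F z ∂μ := by
  have hc0 : 0 < c := lt_of_lt_of_le (by norm_num) hc
  rw [lintegral_comp_add_smul μ F b hc0.ne', abs_of_pos (by positivity), ← inv_pow]
  gcongr
  rw [← ENNReal.ofReal_ofNat 2, ← ENNReal.ofReal_pow zero_le_two]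
  gcongr
  rw [inv_le_comm₀ hc0 two_pos]
  exact hc

theorem setLIntegral_setLIntegral_comp_segment_le {F : E → ℝ≥0∞} (hF : Measurable F) (s : Set E)
    (t : ℝ) :
    ∫⁻ x in s, ∫⁻ y in s, F (y + t • (x - y)) ∂μ ∂μ ≤ 2 ^ finrank ℝ E * μ s * ∫⁻ z, F z ∂μ := by
  rw [mul_right_comm]
  rcases le_total t 2⁻¹ with ht2 | ht2
  · have hrw : ∀ x y : E, y + t • (x - y) = t • x + (1 - t) • y := fun x y => by module
    calc ∫⁻ x in s, ∫⁻ y in s, F (y + t • (x - y)) ∂μ ∂μ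
        ≤ ∫⁻ x in s, 2 ^ finrank ℝ E * ∫⁻ z, F z ∂μ ∂μ := by
          simp_rw [hrw]
          exact lintegral_mono fun x => (setLIntegral_le_lintegral _ _).trans
            (lintegral_comp_add_smul_le μ F _ (by linarith))
      _ = _ := setLIntegral_const _ _
  · have hrw : ∀ x y : E, y + t • (x - y) = (y - t • y) + t • x := fun x y => by module
    rw [lintegral_lintegral_swap (by fun_prop)]
    calc ∫⁻ y in s, ∫⁻ x in s, F (y + t • (x - y)) ∂μ ∂μ
        ≤ ∫⁻ y in s, 2 ^ finrank ℝ E * ∫⁻ z, F z ∂μ ∂μ := by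
          simp_rw [hrw]
          exact lintegral_mono fun y => (setLIntegral_le_lintegral _ _).trans
            (lintegral_comp_add_smul_le μ F _ ht2)
      _ = _ := setLIntegral_const _ _

theorem setLIntegral_setLIntegral_lintegral_segment_le {F : E → ℝ≥0∞} (hF : Measurable F)
    (s : Set E) :
    ∫⁻ x in s, ∫⁻ y in s, (∫⁻ t in Ioc (0 : ℝ) 1, F (y + t • (x - y))) ∂μ ∂μ ≤
      2 ^ finrank ℝ E * μ s * ∫⁻ z, F z ∂μ := by
  have hF' : Measurable fun p : (E × ℝ) × E => F (p.2 + p.1.2 • (p.1.1 - p.2)) := by fun_prop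
  calc ∫⁻ x in s, ∫⁻ y in s, (∫⁻ t in Ioc (0 : ℝ) 1, F (y + t • (x - y))) ∂μ ∂μ
      = ∫⁻ t in Ioc (0 : ℝ) 1, ∫⁻ x in s, ∫⁻ y in s, F (y + t • (x - y)) ∂μ ∂μ := by
        refine (lintegral_congr fun x => lintegral_lintegral_swap (by fun_prop)).trans ?_
        exact lintegral_lintegral_swap hF'.lintegral_prod_right'.aemeasurable
    _ ≤ ∫⁻ t in Ioc (0 : ℝ) 1, 2 ^ finrank ℝ E * μ s * ∫⁻ z, F z ∂μ :=
        lintegral_mono fun t => setLIntegral_setLIntegral_comp_segment_le μ hF s t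
    _ = 2 ^ finrank ℝ E * μ s * ∫⁻ z, F z ∂μ := by simp

theorem Convex.setLIntegral_ofReal_mul_measure_le {Ω G : Set E} (hΩ : Convex ℝ Ω)
    (hΩm : MeasurableSet Ω) (hGΩ : G ⊆ Ω) {v : E → ℝ} (hv : ∀ x ∈ Ω, DifferentiableAt ℝ v x)
    {M : ℝ} (hvM : ∀ y ∈ G, v y ≤ M) :
    (∫⁻ x in Ω, ENNReal.ofReal (v x) ∂μ) * μ G ≤ ENNReal.ofReal M * μ G * μ Ω +
      Metric.ediam Ω * (2 ^ finrank ℝ E * μ Ω * ∫⁻ x in Ω, ‖fderiv ℝ v x‖ₑ ∂μ) := by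
  have hF : Measurable (Ω.indicator (‖fderiv ℝ v ·‖ₑ)) :=
    (measurable_fderiv ℝ v).enorm.indicator hΩm
  set H : E → E → ℝ≥0∞ := fun x y =>
    ∫⁻ t in Ioc (0 : ℝ) 1, Ω.indicator (‖fderiv ℝ v ·‖ₑ) (y + t • (x - y))
  have hH : Measurable (Function.uncurry H) :=
    (hF.comp (by fun_prop : Measurable fun p : (E × E) × ℝ =>
      p.1.2 + p.2 • (p.1.1 - p.1.2))).lintegral_prod_right'
  have hHΩ : Measurable fun x => ∫⁻ y in Ω, H x y ∂μ := hH.lintegral_prod_right'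
  have hpt (x : E) (hx : x ∈ Ω) : ENNReal.ofReal (v x) * μ G ≤
      ENNReal.ofReal M * μ G + Metric.ediam Ω * ∫⁻ y in Ω, H x y ∂μ :=
    calc ENNReal.ofReal (v x) * μ G = ∫⁻ _ in G, ENNReal.ofReal (v x) ∂μ :=
          (setLIntegral_const _ _).symm
      _ ≤ ∫⁻ y in G, ENNReal.ofReal M + Metric.ediam Ω * H x y ∂μ :=
          setLIntegral_mono (measurable_const.add (hH.of_uncurry_left.const_mul _)) fun y hy =>
            (hΩ.ofReal_le_add_ediam_mul_lintegral_indicator hv hx (hGΩ hy)).trans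
              (by gcongr; exact hvM y hy)
      _ = ENNReal.ofReal M * μ G + Metric.ediam Ω * ∫⁻ y in G, H x y ∂μ := by
          rw [lintegral_add_left measurable_const, setLIntegral_const,
            lintegral_const_mul _ hH.of_uncurry_left]
      _ ≤ _ := by gcongr
  have hkernel := setLIntegral_setLIntegral_lintegral_segment_le μ hF Ω
  rw [lintegral_indicator hΩm] at hkernel
  calc (∫⁻ x in Ω, ENNReal.ofReal (v x) ∂μ) * μ G
      ≤ ∫⁻ x in Ω, ENNReal.ofReal (v x) * μ G ∂μ := lintegral_mul_const_le _ _
    _ ≤ ∫⁻ x in Ω, ENNReal.ofReal M * μ G + Metric.ediam Ω * ∫⁻ y in Ω, H x y ∂μ ∂μ :=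
        setLIntegral_mono (measurable_const.add (hHΩ.const_mul _)) hpt
    _ = ENNReal.ofReal M * μ G * μ Ω + Metric.ediam Ω * ∫⁻ x in Ω, ∫⁻ y in Ω, H x y ∂μ ∂μ := by
        rw [lintegral_add_left measurable_const, setLIntegral_const, lintegral_const_mul _ hHΩ]
    _ ≤ _ := by gcongr

theorem Convex.integral_mul_measureReal_le {Ω G : Set E} (hΩ : Convex ℝ Ω)
    (hΩm : MeasurableSet Ω) (hΩb : Bornology.IsBounded Ω) (hGΩ : G ⊆ Ω) {v : E → ℝ}
    (hv : ∀ x ∈ Ω, DifferentiableAt ℝ v x) (hv0 : ∀ x ∈ Ω, 0 ≤ v x) (hvi : IntegrableOn v Ω μ)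
    (hdvi : IntegrableOn (fun x => ‖fderiv ℝ v x‖) Ω μ) {M : ℝ} (hM : 0 ≤ M)
    (hvM : ∀ y ∈ G, v y ≤ M) :
    (∫ x in Ω, v x ∂μ) * μ.real G ≤ M * μ.real G * μ.real Ω +
      Metric.diam Ω * (2 ^ finrank ℝ E * μ.real Ω * ∫ x in Ω, ‖fderiv ℝ v x‖ ∂μ) := by
  have hΩfin : μ Ω ≠ ∞ := hΩb.measure_lt_top.ne
  have hGfin : μ G ≠ ∞ := ne_top_of_le_ne_top hΩfin (measure_mono hGΩ)
  have hdiam : Metric.ediam Ω ≠ ∞ := hΩb.ediam_ne_top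
  have hI0 : 0 ≤ ∫ x in Ω, v x ∂μ := integral_nonneg_of_ae (ae_restrict_of_forall_mem hΩm hv0)
  have hJ0 : 0 ≤ ∫ x in Ω, ‖fderiv ℝ v x‖ ∂μ := integral_nonneg fun x => norm_nonneg _
  have hI : ∫⁻ x in Ω, ENNReal.ofReal (v x) ∂μ = ENNReal.ofReal (∫ x in Ω, v x ∂μ) :=
    (ofReal_integral_eq_lintegral_ofReal hvi (ae_restrict_of_forall_mem hΩm hv0)).symm
  have hJ : ∫⁻ x in Ω, ‖fderiv ℝ v x‖ₑ ∂μ = ENNReal.ofReal (∫ x in Ω, ‖fderiv ℝ v x‖ ∂μ) := by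
    simpa only [ofReal_norm] using
      (ofReal_integral_eq_lintegral_ofReal hdvi (ae_of_all _ fun x => norm_nonneg _)).symm
  have h := hΩ.setLIntegral_ofReal_mul_measure_le μ hΩm hGΩ hv hvM
  rw [hI, hJ] at h
  have h := ENNReal.toReal_mono (by finiteness) h
  rw [ENNReal.toReal_add (by finiteness) (by finiteness)] at h
  simp only [ENNReal.toReal_mul, ENNReal.toReal_ofReal hM, ENNReal.toReal_pow,
    ENNReal.toReal_ofNat, ENNReal.toReal_ofReal hI0, ENNReal.toReal_ofReal hJ0] at h
  exact h

end

theorem stmt0_general (d : ℕ) (Ω : Set (EuclideanSpace ℝ (Fin d)))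
    (hne : Ω.Nonempty) (hbdd : Bornology.IsBounded Ω) (hopen : IsOpen Ω)
    (hconv : Convex ℝ Ω) :
    ∃ C₁ C₂ : ℝ, 0 < C₁ ∧ 0 < C₂ ∧
      ∀ v : EuclideanSpace ℝ (Fin d) → ℝ,
        (∀ x ∈ Ω, DifferentiableAt ℝ v x) →
        (∀ x ∈ Ω, 0 ≤ v x) →
        IntegrableOn v Ω →
        IntegrableOn (fun x => ‖fderiv ℝ v x‖) Ω →
        ∫ x in Ω, v x ≤
          (volume Ω).toReal * Real.exp (C₁ * ∫ x in Ω, max (Real.log (v x)) 0)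
            + (C₂ / (volume Ω).toReal) * ∫ x in Ω, ‖fderiv ℝ v x‖ := by
  have hΩm : MeasurableSet Ω := hopen.measurableSet
  have hΩfin : volume Ω ≠ ∞ := hbdd.measure_lt_top.ne
  have hV : 0 < volume.real Ω := ENNReal.toReal_pos (hopen.measure_pos volume hne).ne' hΩfin
  refine ⟨2 / volume.real Ω, (Metric.diam Ω + 1) * 2 ^ (d + 1) * volume.real Ω, by positivity,
    by positivity, fun v hv hv0 hvi hdvi => ?_⟩
  set M := Real.exp (2 / volume.real Ω * ∫ x in Ω, max (Real.log (v x)) 0)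
  set G := {x ∈ Ω | v x ≤ M}
  have hGfin : volume G ≠ ∞ := ne_top_of_le_ne_top hΩfin (measure_mono (sep_subset Ω _))
  have hG : volume.real Ω ≤ 2 * volume.real G := by
    have h := ENNReal.toReal_mono (by finiteness) (measure_le_two_mul_measure_le_exp hΩm hΩfin hvi)
    rwa [ENNReal.toReal_mul, ENNReal.toReal_ofNat] at h
  have hmain := hconv.integral_mul_measureReal_le volume (G := G) (M := M) hΩm hbdd
    (sep_subset _ _) hv hv0 hvi hdvi (Real.exp_pos _).le fun y hy => hy.2
  rw [finrank_euclideanSpace_fin] at hmain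
  have hJ : 0 ≤ ∫ x in Ω, ‖fderiv ℝ v x‖ := integral_nonneg fun x => norm_nonneg _
  rw [← measureReal_def, mul_div_cancel_right₀ _ hV.ne']
  have hg : 0 < volume.real G := by linarith
  refine le_of_mul_le_mul_right (hmain.trans ?_) hg
  rw [pow_succ]
  nlinarith [mul_le_mul_of_nonneg_left hG
      (by positivity : 0 ≤ Metric.diam Ω * 2 ^ d * ∫ x in Ω, ‖fderiv ℝ v x‖),
    mul_nonneg (mul_nonneg (pow_nonneg zero_le_two d) hJ) hg.le]

/-- Generalized Poincaré inequality (Lemma 3.2 of the paper): for a nonempty bounded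
open convex domain `Ω ⊆ ℝ^d` there are constants `C₁, C₂ > 0`, depending only on `Ω`,
such that every nonnegative differentiable `v` with `v` and `‖∇v‖` integrable on `Ω`
satisfies `∫_Ω v ≤ |Ω| exp(C₁ K) + (C₂/|Ω|) ∫_Ω ‖∇v‖`, where `K = ∫_Ω (log v)⁺`. -/
theorem stmt0 (d : ℕ) (hd : 1 ≤ d) (Ω : Set (EuclideanSpace ℝ (Fin d)))
    (hne : Ω.Nonempty) (hbdd : Bornology.IsBounded Ω) (hopen : IsOpen Ω)
    (hconv : Convex ℝ Ω) :
    ∃ C₁ C₂ : ℝ, 0 < C₁ ∧ 0 < C₂ ∧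
      ∀ v : EuclideanSpace ℝ (Fin d) → ℝ,
        (∀ x ∈ Ω, DifferentiableAt ℝ v x) →
        (∀ x ∈ Ω, 0 ≤ v x) →
        IntegrableOn v Ω →
        IntegrableOn (fun x => ‖fderiv ℝ v x‖) Ω →
        ∫ x in Ω, v x ≤
          (volume Ω).toReal * Real.exp (C₁ * ∫ x in Ω, max (Real.log (v x)) 0)
            + (C₂ / (volume Ω).toReal) * ∫ x in Ω, ‖fderiv ℝ v x‖ :=
  stmt0_general d Ω hne hbdd hopen hconv
end

section
/- Let f : (−1, 1) → ℝ be continuous and nondecreasing with f(r) → +∞ as r → 1⁻. Let κ ∈ (0, 1], M ≥ 0 and τ > 0. Then there exists ω ∈ (0, 1), depending only on f, κ, M and τ (but not on T), such that for every T > 2τ and every differentiable function y : [τ, T] → ℝ satisfying y(t) ∈ (−1, 1) for all t ∈ [τ, T] and y′(t) + κ·f(y(t)) ≤ M for all t ∈ [τ, T], one has y(t) ≤ 1 − ω for all t ∈ [2τ, T]. -/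
/-!
Wherever `y` lies in the band `[1 - δ, 1)` on which `κ f ≥ M + 1`, the inequality forces `y' ≤ -1`.
Comparing `y` with the line of slope `-1/2` started at `1` shows that after time `δ` the
solution has dropped to `1 - δ/2`, and the constant `1 - δ/2`, which still lies in the band, is a
barrier that `y` can never cross again. Choosing `δ ≤ τ` gives `ω = δ/2`, independent of `T`.
-/

open Set Filter Topology

lemma eventually_forall_Ico_le_of_tendsto_nhdsWithin_Ioo {f : ℝ → ℝ}
    (hf : Tendsto f (𝓝[Ioo (-1 : ℝ) 1] 1) atTop) (L : ℝ) :
    ∀ᶠ δ in 𝓝[>] (0 : ℝ), ∀ x ∈ Ico (1 - δ) 1, L ≤ f x := by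
  have hL : {x | L ≤ f x} ∈ 𝓝[<] (1 : ℝ) := by
    rw [← nhdsWithin_Ioo_eq_nhdsLT (by norm_num : (-1 : ℝ) < 1)]
    exact hf.eventually (eventually_ge_atTop L)
  obtain ⟨l, hl, hsub⟩ := mem_nhdsLT_iff_exists_Ico_subset.1 hL
  filter_upwards [nhdsWithin_le_nhds (gt_mem_nhds (sub_pos.2 hl))] with δ hδ x hx
  exact hsub ⟨by linarith [hx.1], hx.2⟩

section Barrier

variable {y : ℝ → ℝ} {a b : ℝ}

lemma le_line_of_deriv_lt_of_eq (hy : ∀ s ∈ Icc a b, DifferentiableAt ℝ y s) {v k : ℝ}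
    (ha : y a ≤ v) (htouch : ∀ s ∈ Ico a b, y s = v - k * (s - a) → deriv y s < -k) :
    ∀ s ∈ Icc a b, y s ≤ v - k * (s - a) := by
  have hline : ∀ s, HasDerivAt (fun s => v - k * (s - a)) (-k) s := fun s => by
    simpa using ((hasDerivAt_id s).sub_const a).const_mul k |>.const_sub v
  exact image_le_of_deriv_right_lt_deriv_boundary'
    (fun s hs => (hy s hs).continuousAt.continuousWithinAt)
    (fun s hs => (hy s (Ico_subset_Icc_self hs)).hasDerivAt.hasDerivWithinAt)
    (by simpa using ha) (by fun_prop) (fun s _ => (hline s).hasDerivWithinAt) htouch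

lemma le_sub_half_of_deriv_le_neg_one {v δ : ℝ} (hδ : 0 < δ)
    (hy : ∀ s ∈ Icc a b, DifferentiableAt ℝ y s) (hya : y a ≤ v)
    (hderiv : ∀ s ∈ Icc a b, v - δ ≤ y s → deriv y s ≤ -1) :
    ∀ t ∈ Icc (a + δ) b, y t ≤ v - δ / 2 := by
  intro t ht
  have hab : a + δ ≤ b := ht.1.trans ht.2
  have hdescent : ∀ s ∈ Icc a (a + δ), y s ≤ v - 1 / 2 * (s - a) := by
    refine le_line_of_deriv_lt_of_eq (fun s hs => hy s ⟨hs.1, hs.2.trans hab⟩) hya ?_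
    intro s hs hys
    have := hderiv s ⟨hs.1, hs.2.le.trans hab⟩ (by linarith [hs.2])
    linarith
  have hmid : y (a + δ) ≤ v - δ / 2 := by
    have := hdescent (a + δ) ⟨by linarith, le_rfl⟩
    linarith
  have hbarrier : ∀ s ∈ Icc (a + δ) b, y s ≤ v - δ / 2 - 0 * (s - (a + δ)) := by
    refine le_line_of_deriv_lt_of_eq (fun s hs => hy s ⟨by linarith [hs.1], hs.2⟩)
      (by simpa using hmid) ?_
    intro s hs hys
    have := hderiv s ⟨by linarith [hs.1], hs.2.le⟩ (by linarith)
    linarith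
  simpa using hbarrier t ht

end Barrier

theorem stmt1_general (f : ℝ → ℝ)
    (hftop : Tendsto f (nhdsWithin 1 (Ioo (-1 : ℝ) 1)) atTop)
    (κ M τ : ℝ) (hκ : κ ∈ Ioc (0 : ℝ) 1) (hτ : 0 < τ) :
    ∃ ω ∈ Ioo (0 : ℝ) 1, ∀ T : ℝ, 2 * τ < T → ∀ y : ℝ → ℝ,
      (∀ t ∈ Icc τ T, DifferentiableAt ℝ y t) →
      (∀ t ∈ Icc τ T, y t ∈ Ioo (-1 : ℝ) 1) →
      (∀ t ∈ Icc τ T, deriv y t + κ * f (y t) ≤ M) →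
      ∀ t ∈ Icc (2 * τ) T, y t ≤ 1 - ω := by
  obtain ⟨δ, hfδ, (hδ : 0 < δ), hδτ, hδ2⟩ :=
    ((eventually_forall_Ico_le_of_tendsto_nhdsWithin_Ioo hftop ((M + 1) / κ)).and
      (eventually_mem_nhdsWithin.and (nhdsWithin_le_nhds
        ((ge_mem_nhds hτ).and (gt_mem_nhds (by norm_num : (0 : ℝ) < 2)))))).exists
  refine ⟨δ / 2, ⟨by positivity, by linarith⟩, fun T hT y hy hmem hode t ht => ?_⟩
  refine le_sub_half_of_deriv_le_neg_one hδ hy (hmem τ ⟨le_rfl, by linarith⟩).2.le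
    (fun s hs hys => ?_) t ⟨by linarith [ht.1], ht.2⟩
  have hforce : M + 1 ≤ κ * f (y s) :=
    (div_le_iff₀' hκ.1).1 (hfδ (y s) ⟨hys, (hmem s hs).2⟩)
  linarith [hode s hs]

/-- ODE comparison fact behind Corollary 3.2 of the paper: if `f : (-1,1) → ℝ` is
continuous, nondecreasing and blows up to `+∞` at `1⁻`, `κ ∈ (0,1]`, `M ≥ 0`, `τ > 0`,
then there is `ω ∈ (0,1)`, independent of `T`, such that any differentiable
`y : [τ,T] → (-1,1)` with `y' + κ f(y) ≤ M` on `[τ,T]` satisfies `y ≤ 1 - ω`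
on `[2τ,T]`. -/
theorem stmt1 (f : ℝ → ℝ)
    (hfc : ContinuousOn f (Ioo (-1 : ℝ) 1))
    (hfm : MonotoneOn f (Ioo (-1 : ℝ) 1))
    (hftop : Tendsto f (nhdsWithin 1 (Ioo (-1 : ℝ) 1)) atTop)
    (κ M τ : ℝ) (hκ : κ ∈ Ioc (0 : ℝ) 1) (hM : 0 ≤ M) (hτ : 0 < τ) :
    ∃ ω ∈ Ioo (0 : ℝ) 1, ∀ T : ℝ, 2 * τ < T → ∀ y : ℝ → ℝ,
      (∀ t ∈ Icc τ T, DifferentiableAt ℝ y t) →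
      (∀ t ∈ Icc τ T, y t ∈ Ioo (-1 : ℝ) 1) →
      (∀ t ∈ Icc τ T, deriv y t + κ * f (y t) ≤ M) →
      ∀ t ∈ Icc (2 * τ) T, y t ≤ 1 - ω :=
  stmt1_general f hftop κ M τ hκ hτ
end

section
/- Let κ > 0, c ≥ 0, c′ ≥ 0 and M ≥ 0. Let m : [0, ∞) → [0, ∞) be continuous with ∫₀^t m(s) ds ≤ M for every t ≥ 0, and let y : [0, ∞) → ℝ be differentiable with y(t) ≥ 1 for all t ≥ 0 and satisfying the differential inequality y′(t) + κ ≤ c·m(t)·y(t) + c′·y(t)^{−1/2} for all t ≥ 0. Then y(t) ≤ max(y(0), 4c′²/κ²)·exp(c·M) for all t ≥ 0. -/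
/-!
Above the threshold `4c'²/κ²` the term `c' y^{-1/2}` is at most `κ/2`, so there `y' < c m y`
strictly. With `K = max (y 0) (4c'²/κ²)`, the barrier `K · exp (c ∫₀ᵗ m)` therefore cannot be
touched from below by `y`: at a contact point `y ≥ K` lies above the threshold, while the barrier
grows at rate exactly `c m y`. The barrier itself is at most `K · exp (c M)`.
-/

open Set intervalIntegral Topology

theorem mul_rpow_neg_one_half_le_half {κ c' y : ℝ} (hκ : 0 < κ) (hy : 0 < y)
    (h : 4 * c' ^ 2 / κ ^ 2 ≤ y) : c' * y ^ (-(1 : ℝ) / 2) ≤ κ / 2 := by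
  have hs : 0 < √y := Real.sqrt_pos.2 hy
  rw [neg_div, Real.rpow_neg hy.le, ← Real.sqrt_eq_rpow, ← div_eq_mul_inv, div_le_iff₀ hs]
  have h2 : (2 * c') ^ 2 ≤ (κ * √y) ^ 2 := by
    rw [mul_pow, mul_pow, Real.sq_sqrt hy.le]
    rw [div_le_iff₀ (by positivity)] at h
    linarith
  nlinarith [abs_le_of_sq_le_sq' h2 (by positivity)]

theorem hasDerivWithinAt_integral_Ici_of_continuousOn {m : ℝ → ℝ} {a b x : ℝ}
    (hm : ContinuousOn m (Icc a b)) (hx : x ∈ Ico a b) :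
    HasDerivWithinAt (fun u => ∫ s in a..u, m s) (m x) (Ici x) x := by
  have hIcc : Icc a b ∈ 𝓝[>] x := nhdsWithin_mono x Ioi_subset_Ici_self (Icc_mem_nhdsGE_of_mem hx)
  refine integral_hasDerivWithinAt_right ?_ ?_
    ((hm x (Ico_subset_Icc_self hx)).mono_of_mem_nhdsWithin hIcc)
  · exact (hm.mono (uIcc_subset_Icc (left_mem_Icc.2 (hx.1.trans hx.2.le))
      (Ico_subset_Icc_self hx))).intervalIntegrable
  · exact (hm.stronglyMeasurableAtFilter_nhdsWithin measurableSet_Icc x).filter_mono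
      (nhdsWithin_le_of_mem hIcc)

theorem le_mul_exp_integral_of_deriv_lt_mul {f f' m : ℝ → ℝ} {a b K : ℝ} (hK : 0 ≤ K)
    (hf : ContinuousOn f (Icc a b)) (hf' : ∀ x ∈ Ico a b, HasDerivWithinAt f (f' x) (Ici x) x)
    (hm : ContinuousOn m (Icc a b)) (hm0 : ∀ x ∈ Icc a b, 0 ≤ m x) (ha : f a ≤ K)
    (bound : ∀ x ∈ Ico a b, K ≤ f x → f' x < m x * f x) :
    ∀ ⦃x⦄, x ∈ Icc a b → f x ≤ K * Real.exp (∫ s in a..x, m s) := by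
  have hK_le : ∀ x ∈ Icc a b, K ≤ K * Real.exp (∫ s in a..x, m s) := fun x hx =>
    le_mul_of_one_le_right hK <| Real.one_le_exp <|
      integral_nonneg hx.1 fun s hs => hm0 s ⟨hs.1, hs.2.trans hx.2⟩
  refine image_le_of_deriv_right_lt_deriv_boundary' hf hf' (by simpa using ha) ?_
    (fun x hx => ((hasDerivWithinAt_integral_Ici_of_continuousOn hm hx).exp).const_mul K)
    fun x hx hfx => ?_
  · intro x hx
    have hab : a ≤ b := hx.1.trans hx.2
    rw [← uIcc_of_le hab] at hm hx ⊢
    exact (continuousOn_const.mul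
      (continuousOn_primitive_interval (hm.integrableOn_compact isCompact_uIcc)).rexp) x hx
  · have := bound x hx (hfx ▸ hK_le x (Ico_subset_Icc_self hx))
    rw [hfx] at this
    linarith

theorem stmt2_general (κ c c' M : ℝ) (hκ : 0 < κ) (hc : 0 ≤ c)
    (m : ℝ → ℝ) (hmc : ContinuousOn m (Ici (0 : ℝ)))
    (hmnn : ∀ t ∈ Ici (0 : ℝ), 0 ≤ m t)
    (hmint : ∀ t ∈ Ici (0 : ℝ), ∫ s in (0 : ℝ)..t, m s ≤ M)
    (y : ℝ → ℝ) (hyd : ∀ t ∈ Ici (0 : ℝ), DifferentiableAt ℝ y t)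
    (hy1 : ∀ t ∈ Ici (0 : ℝ), 1 ≤ y t)
    (hineq : ∀ t ∈ Ici (0 : ℝ),
      deriv y t + κ ≤ c * m t * y t + c' * (y t) ^ (-(1 : ℝ) / 2)) :
    ∀ t ∈ Ici (0 : ℝ), y t ≤ max (y 0) (4 * c' ^ 2 / κ ^ 2) * Real.exp (c * M) := by
  intro t ht
  set K := max (y 0) (4 * c' ^ 2 / κ ^ 2)
  have hK : 0 ≤ K := zero_le_one.trans ((hy1 0 self_mem_Ici).trans (le_max_left _ _))
  have hderiv_lt : ∀ x ∈ Ico 0 t, K ≤ y x → deriv y x < c * m x * y x := fun x hx hKx => by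
    have hy := mul_rpow_neg_one_half_le_half hκ (zero_lt_one.trans_le (hy1 x hx.1))
      ((le_max_right _ _).trans hKx)
    linarith [hineq x hx.1]
  have hbarrier := le_mul_exp_integral_of_deriv_lt_mul (m := fun s => c * m s) hK
    (fun x hx => (hyd x hx.1).continuousAt.continuousWithinAt)
    (fun x hx => (hyd x hx.1).hasDerivAt.hasDerivWithinAt)
    (continuousOn_const.mul (hmc.mono Icc_subset_Ici_self))
    (fun x hx => mul_nonneg hc (hmnn x hx.1)) (le_max_left _ _) hderiv_lt ⟨ht, le_rfl⟩
  calc y t ≤ K * Real.exp (∫ s in (0 : ℝ)..t, c * m s) := hbarrier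
    _ ≤ K * Real.exp (c * M) := by
      rw [integral_const_mul]
      gcongr
      exact hmint t ht

/-- Gronwall-type comparison argument from the proof of Lemma 5.2 of the paper:
if `y ≥ 1` satisfies `y' + κ ≤ c m(t) y + c' y^{-1/2}` with `m ≥ 0` continuous and
`∫₀^t m ≤ M` for all `t ≥ 0`, then `y(t) ≤ max(y(0), 4c'²/κ²)·exp(cM)` for all `t ≥ 0`. -/
theorem stmt2 (κ c c' M : ℝ) (hκ : 0 < κ) (hc : 0 ≤ c) (hc' : 0 ≤ c') (hM : 0 ≤ M)
    (m : ℝ → ℝ) (hmc : ContinuousOn m (Ici (0 : ℝ)))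
    (hmnn : ∀ t ∈ Ici (0 : ℝ), 0 ≤ m t)
    (hmint : ∀ t ∈ Ici (0 : ℝ), ∫ s in (0 : ℝ)..t, m s ≤ M)
    (y : ℝ → ℝ) (hyd : ∀ t ∈ Ici (0 : ℝ), DifferentiableAt ℝ y t)
    (hy1 : ∀ t ∈ Ici (0 : ℝ), 1 ≤ y t)
    (hineq : ∀ t ∈ Ici (0 : ℝ),
      deriv y t + κ ≤ c * m t * y t + c' * (y t) ^ (-(1 : ℝ) / 2)) :
    ∀ t ∈ Ici (0 : ℝ), y t ≤ max (y 0) (4 * c' ^ 2 / κ ^ 2) * Real.exp (c * M) :=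
  stmt2_general κ c c' M hκ hc m hmc hmnn hmint y hyd hy1 hineq
end

section
/- Let f, f_Γ : (−1, 1) → ℝ be nondecreasing with f(0) = f_Γ(0) = 0, and suppose there exist κ ∈ (0, 1] and C ≥ 0 such that |f_Γ(r)| ≥ κ·|f(r)| − C for all r ∈ (−1, 1). Then f(r)·f_Γ(r) ≥ (κ/2)·|f(r)|² − C²/(2κ) for all r ∈ (−1, 1). -/
open Set

/-- The reinforced condition (2.31), `|f_Γ| ≥ κ |f| - C` with `κ ∈ (0,1]`, `C ≥ 0`,
for nondecreasing `f, f_Γ : (-1,1) → ℝ` vanishing at `0`, implies the compatibility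
condition (2.25): `f f_Γ ≥ (κ/2) |f|² - C²/(2κ)` on `(-1,1)`. -/
theorem stmt6 (f fΓ : ℝ → ℝ)
    (hf : MonotoneOn f (Ioo (-1 : ℝ) 1)) (hfΓ : MonotoneOn fΓ (Ioo (-1 : ℝ) 1))
    (hf0 : f 0 = 0) (hfΓ0 : fΓ 0 = 0)
    (κ C : ℝ) (hκ : κ ∈ Ioc (0 : ℝ) 1) (hC : 0 ≤ C)
    (hcomp : ∀ r ∈ Ioo (-1 : ℝ) 1, κ * |f r| - C ≤ |fΓ r|) :
    ∀ r ∈ Ioo (-1 : ℝ) 1, κ / 2 * |f r| ^ 2 - C ^ 2 / (2 * κ) ≤ f r * fΓ r := by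
  intro r hr
  have h0 : (0:ℝ) ∈ Ioo (-1:ℝ) 1 := by constructor <;> norm_num
  have hκ0 := hκ.1
  have hc := hcomp r hr
  rcases le_total 0 r with h | h
  · have hfr : 0 ≤ f r := hf0 ▸ hf h0 hr h
    have hgr : 0 ≤ fΓ r := hfΓ0 ▸ hfΓ h0 hr h
    rw [abs_of_nonneg hfr] at hc ⊢
    rw [abs_of_nonneg hgr] at hc
    have key : κ * f r * f r - C * f r ≤ f r * fΓ r := by nlinarith
    have amgm : C * f r ≤ κ / 2 * f r ^ 2 + C ^ 2 / (2 * κ) := by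
      have h2 : 0 ≤ (κ * f r - C)^2 := sq_nonneg _
      have h3 : C * f r - κ / 2 * f r ^ 2 ≤ C ^ 2 / (2 * κ) := by
        rw [le_div_iff₀ (by positivity)]; nlinarith
      linarith
    nlinarith
  · have hfr : f r ≤ 0 := hf0 ▸ hf hr h0 h
    have hgr : fΓ r ≤ 0 := hfΓ0 ▸ hfΓ hr h0 h
    rw [abs_of_nonpos hfr] at hc ⊢
    rw [abs_of_nonpos hgr] at hc
    have key : κ * f r * f r - C * (-f r) ≤ f r * fΓ r := by nlinarith
    have amgm : C * (-f r) ≤ κ / 2 * f r ^ 2 + C ^ 2 / (2 * κ) := by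
      have h2 : 0 ≤ (κ * f r + C)^2 := sq_nonneg _
      have h3 : C * (-f r) - κ / 2 * f r ^ 2 ≤ C ^ 2 / (2 * κ) := by
        rw [le_div_iff₀ (by positivity)]; nlinarith
      linarith
    nlinarith
end
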